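/- arXiv:1703.09447 — 7 statements merged into one kernel-verified Lean document; each statement's English description precedes it below -/
import Mathlib

section
/- Suppose there exist points x₀₀, x₁₀, x₀₁, x₁₁ in K satisfying the parallelogram identity x₀₀ + x₁₁ = x₁₀ + x₀₁, with f and g taking the values (0,0), (1,0), (0,1), (1,1) at these points respectively. If λ ∈ [0,1] and μ₁, μ₂ ∈ [0,1] are such that the noisy effects λf + (1−λ)μ₁ and λg + (1−λ)μ₂ are compatible, then λ ≤ 1/2. -/
/-- If parallelogram corner points with corner values `(0,0),(1,0),(0,1),(1,1)` exist
and the noisy effects `λf + (1-λ)μ₁` and `λg + (1-λ)μ₂` are compatible, then `λ ≤ 1/2`. -/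
theorem stmt_3 {n : ℕ} (K : Set (EuclideanSpace ℝ (Fin n)))
    (hKconv : Convex ℝ K) (hKcomp : IsCompact K)
    (f g : EuclideanSpace ℝ (Fin n) →ᵃ[ℝ] ℝ)
    (hf : ∀ x ∈ K, 0 ≤ f x ∧ f x ≤ 1)
    (hg : ∀ x ∈ K, 0 ≤ g x ∧ g x ≤ 1)
    (x00 x10 x01 x11 : EuclideanSpace ℝ (Fin n))
    (hx00 : x00 ∈ K) (hx10 : x10 ∈ K) (hx01 : x01 ∈ K) (hx11 : x11 ∈ K)
    (hf00 : f x00 = 0) (hg00 : g x00 = 0)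
    (hf10 : f x10 = 1) (hg10 : g x10 = 0)
    (hf01 : f x01 = 0) (hg01 : g x01 = 1)
    (hf11 : f x11 = 1) (hg11 : g x11 = 1)
    (hpar : x00 + x11 = x10 + x01)
    (lam μ₁ μ₂ : ℝ) (hlam : lam ∈ Set.Icc (0:ℝ) 1)
    (hμ₁ : μ₁ ∈ Set.Icc (0:ℝ) 1) (hμ₂ : μ₂ ∈ Set.Icc (0:ℝ) 1)
    (hcompat : ∃ p : EuclideanSpace ℝ (Fin n) →ᵃ[ℝ] ℝ, ∀ x ∈ K,
      0 ≤ p x ∧ p x ≤ lam * f x + (1 - lam) * μ₁ ∧ p x ≤ lam * g x + (1 - lam) * μ₂ ∧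
      (lam * f x + (1 - lam) * μ₁) + (lam * g x + (1 - lam) * μ₂) ≤ 1 + p x) :
    lam ≤ 1 / 2 := by
  obtain ⟨p, hp⟩ := hcompat
  have h00 := hp x00 hx00
  have h10 := hp x10 hx10
  have h01 := hp x01 hx01
  have h11 := hp x11 hx11
  have hx11' : x11 = (x01 -ᵥ x00) +ᵥ x10 := by
    simp only [vsub_eq_sub, vadd_eq_add]
    have h := congrArg (fun z => z - x00) hpar
    simp only [add_sub_cancel_left] at h
    rw [h]; abel
  have hpadd : p x11 = p x01 - p x00 + p x10 := by
    rw [hx11', AffineMap.map_vadd, p.linearMap_vsub]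
    simp [vsub_eq_sub, vadd_eq_add]
  simp only [hf00, hg00, hf10, hg10, hf01, hg01, hf11, hg11] at h00 h10 h01 h11
  obtain ⟨hp00, _, _, _⟩ := h00
  obtain ⟨_, _, hp10, _⟩ := h10
  obtain ⟨_, hp01, _, _⟩ := h01
  obtain ⟨_, _, _, hp11⟩ := h11
  nlinarith [hμ₁.1, hμ₁.2, hμ₂.1, hμ₂.2, hlam.1, hlam.2]
end

section
/- For any pair of effects f, g on a compact convex set K, the noisy effects (1/2)f + (1/4) and (1/2)g + (1/4) are compatible; hence the degree of compatibility of any two two-outcome measurements is at least 1/2. -/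
/-- For any pair of effects `f, g`, the noisy effects `(1/2)f + 1/4` and `(1/2)g + 1/4`
are compatible; hence the degree of compatibility of any two two-outcome
measurements is at least `1/2`. -/
theorem stmt_4 {n : ℕ} (K : Set (EuclideanSpace ℝ (Fin n)))
    (hKconv : Convex ℝ K) (hKcomp : IsCompact K)
    (f g : EuclideanSpace ℝ (Fin n) →ᵃ[ℝ] ℝ)
    (hf : ∀ x ∈ K, 0 ≤ f x ∧ f x ≤ 1)
    (hg : ∀ x ∈ K, 0 ≤ g x ∧ g x ≤ 1) :
    ∃ p : EuclideanSpace ℝ (Fin n) →ᵃ[ℝ] ℝ, ∀ x ∈ K,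
      0 ≤ p x ∧ p x ≤ (1/2) * f x + 1/4 ∧ p x ≤ (1/2) * g x + 1/4 ∧
      ((1/2) * f x + 1/4) + ((1/2) * g x + 1/4) ≤ 1 + p x := by
  refine ⟨(4:ℝ)⁻¹ • (f + g), fun x hx => ?_⟩
  obtain ⟨hf0, hf1⟩ := hf x hx
  obtain ⟨hg0, hg1⟩ := hg x hx
  simp only [AffineMap.coe_smul, AffineMap.coe_add, Pi.smul_apply, Pi.add_apply,
    smul_eq_mul]
  refine ⟨by nlinarith, by nlinarith, by nlinarith, by nlinarith⟩
end

section
/- Let x₀₀, x₁₀, x₀₁ ∈ K with f, g effects taking values f(x₀₀)=g(x₀₀)=0, f(x₁₀)=1, g(x₁₀)=0, f(x₀₁)=0, g(x₀₁)=1, and set x₁₁ = x₁₀ + x₀₁ − x₀₀, assumed to lie in K. Then every point y in the intersection of K with the affine hull of {x₀₀, x₁₀, x₀₁} lies in the convex hull of {x₀₀, x₁₀, x₀₁, x₁₁}. -/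
/-- With corner points `x₀₀, x₁₀, x₀₁` and `x₁₁ = x₁₀ + x₀₁ - x₀₀ ∈ K`, every point of
`K` lying in the affine hull of `{x₀₀, x₁₀, x₀₁}` lies in the convex hull of the
four points. -/
theorem stmt_9 {n : ℕ} (K : Set (EuclideanSpace ℝ (Fin n)))
    (hKconv : Convex ℝ K) (hKcomp : IsCompact K)
    (f g : EuclideanSpace ℝ (Fin n) →ᵃ[ℝ] ℝ)
    (hf : ∀ x ∈ K, 0 ≤ f x ∧ f x ≤ 1)
    (hg : ∀ x ∈ K, 0 ≤ g x ∧ g x ≤ 1)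
    (x00 x10 x01 : EuclideanSpace ℝ (Fin n))
    (hx00 : x00 ∈ K) (hx10 : x10 ∈ K) (hx01 : x01 ∈ K)
    (hf00 : f x00 = 0) (hg00 : g x00 = 0)
    (hf10 : f x10 = 1) (hg10 : g x10 = 0)
    (hf01 : f x01 = 0) (hg01 : g x01 = 1)
    (hx11 : x10 + x01 - x00 ∈ K) :
    ∀ y ∈ K, y ∈ affineSpan ℝ ({x00, x10, x01} : Set (EuclideanSpace ℝ (Fin n))) →
      y ∈ convexHull ℝ ({x00, x10, x01, x10 + x01 - x00} : Set (EuclideanSpace ℝ (Fin n))) := by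
  intro y hyK hyA
  -- y - x00 lies in the span of the two direction vectors
  have hx00mem : x00 ∈ affineSpan ℝ ({x00, x10, x01} : Set (EuclideanSpace ℝ (Fin n))) :=
    subset_affineSpan ℝ _ (by simp)
  have hdir : y -ᵥ x00 ∈ vectorSpan ℝ ({x00, x10, x01} : Set (EuclideanSpace ℝ (Fin n))) := by
    have := AffineSubspace.vsub_mem_direction hyA hx00mem
    rwa [direction_affineSpan] at this
  have hspan : vectorSpan ℝ ({x00, x10, x01} : Set (EuclideanSpace ℝ (Fin n)))
      = Submodule.span ℝ ({x10 - x00, x01 - x00} : Set (EuclideanSpace ℝ (Fin n))) := by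
    rw [vectorSpan_eq_span_vsub_set_right ℝ
      (Set.mem_insert x00 {x10, x01})]
    have himg : (· -ᵥ x00) '' ({x00, x10, x01} : Set (EuclideanSpace ℝ (Fin n)))
        = insert 0 ({x10 - x00, x01 - x00} : Set (EuclideanSpace ℝ (Fin n))) := by
      simp [Set.image_insert_eq, vsub_eq_sub]
    rw [himg, Submodule.span_insert_zero]
  rw [hspan, Submodule.mem_span_pair] at hdir
  obtain ⟨a, b, hab⟩ := hdir
  have hy : y = a • (x10 - x00) + b • (x01 - x00) + x00 := by
    have : y -ᵥ x00 = a • (x10 - x00) + b • (x01 - x00) := hab.symm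
    simpa [sub_eq_iff_eq_add] using this
  -- compute f y and g y
  have hfy : f y = a := by
    have : f y = f ((a • (x10 - x00) + b • (x01 - x00)) +ᵥ x00) := by rw [hy]; rfl
    rw [this, f.map_vadd] at *
    simp only [map_add, map_smul]
    have h1 : f.linear (x10 - x00) = f x10 - f x00 := f.linearMap_vsub x10 x00
    have h2 : f.linear (x01 - x00) = f x01 - f x00 := f.linearMap_vsub x01 x00
    rw [h1, h2, hf00, hf10, hf01]
    simp
  have hgy : g y = b := by
    have : g y = g ((a • (x10 - x00) + b • (x01 - x00)) +ᵥ x00) := by rw [hy]; rfl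
    rw [this, g.map_vadd] at *
    simp only [map_add, map_smul]
    have h1 : g.linear (x10 - x00) = g x10 - g x00 := g.linearMap_vsub x10 x00
    have h2 : g.linear (x01 - x00) = g x01 - g x00 := g.linearMap_vsub x01 x00
    rw [h1, h2, hg00, hg10, hg01]
    simp
  have ha0 : 0 ≤ a := hfy ▸ (hf y hyK).1
  have ha1 : a ≤ 1 := hfy ▸ (hf y hyK).2
  have hb0 : 0 ≤ b := hgy ▸ (hg y hyK).1
  have hb1 : b ≤ 1 := hgy ▸ (hg y hyK).2
  set S : Set (EuclideanSpace ℝ (Fin n)) := {x00, x10, x01, x10 + x01 - x00}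
  have hz : ∀ i ∈ Finset.univ, (![x00, x10, x01, x10 + x01 - x00] : Fin 4 → _) i ∈ S := by
    intro i _
    fin_cases i <;> simp [S]
  rcases le_or_gt (a + b) 1 with hle | hgt
  · have hmem := Finset.centerMass_mem_convexHull (Finset.univ : Finset (Fin 4))
      (w := ![1 - a - b, a, b, 0]) (z := ![x00, x10, x01, x10 + x01 - x00])
      (by intro i _; fin_cases i <;> simp <;> linarith) (by
        simp [Fin.sum_univ_four, Matrix.cons_val_two, Matrix.cons_val_three, Matrix.tail_cons]; linarith) hz
    have hcm : Finset.univ.centerMass (![1 - a - b, a, b, 0] : Fin 4 → ℝ)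
        ![x00, x10, x01, x10 + x01 - x00] = y := by
      rw [Finset.centerMass]
      have hsum : ∑ i, (![1 - a - b, a, b, 0] : Fin 4 → ℝ) i = 1 := by
        simp [Fin.sum_univ_four, Matrix.cons_val_two, Matrix.cons_val_three, Matrix.tail_cons]; ring
      rw [hsum, inv_one, one_smul, Fin.sum_univ_four]
      simp only [Matrix.cons_val_zero, Matrix.cons_val_one, Matrix.head_cons, Matrix.cons_val_two, Matrix.cons_val_three, Matrix.tail_cons]
      rw [hy]
      module
    rwa [hcm] at hmem
  · have hmem := Finset.centerMass_mem_convexHull (Finset.univ : Finset (Fin 4))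
      (w := ![0, 1 - b, 1 - a, a + b - 1]) (z := ![x00, x10, x01, x10 + x01 - x00])
      (by intro i _; fin_cases i <;> simp <;> linarith) (by
        simp [Fin.sum_univ_four, Matrix.cons_val_two, Matrix.cons_val_three, Matrix.tail_cons]; linarith) hz
    have hcm : Finset.univ.centerMass (![0, 1 - b, 1 - a, a + b - 1] : Fin 4 → ℝ)
        ![x00, x10, x01, x10 + x01 - x00] = y := by
      rw [Finset.centerMass]
      have hsum : ∑ i, (![0, 1 - b, 1 - a, a + b - 1] : Fin 4 → ℝ) i = 1 := by
        simp [Fin.sum_univ_four, Matrix.cons_val_two, Matrix.cons_val_three, Matrix.tail_cons]; ring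
      rw [hsum, inv_one, one_smul, Fin.sum_univ_four]
      simp only [Matrix.cons_val_zero, Matrix.cons_val_one, Matrix.head_cons, Matrix.cons_val_two, Matrix.cons_val_three, Matrix.tail_cons]
      rw [hy]
      module
    rwa [hcm] at hmem
end

section
/- Suppose effects f, g and points x₀₀, x₁₀, x₀₁, x₁₁ ∈ K satisfy the parallelogram condition x₀₀+x₁₁ = x₁₀+x₀₁ with f,g values (0,0),(1,0),(0,1),(1,1) respectively. If p is an affine witness of compatibility of f and g (0 ≤ p ≤ f, p ≤ g, f+g ≤ 1+p), then p(x₁₁) = 1 and p(x₀₀) = p(x₁₀) = p(x₀₁) = 0. -/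
/-- With parallelogram corner points and corner values, any affine compatibility
witness `p` satisfies `p x₁₁ = 1` and `p x₀₀ = p x₁₀ = p x₀₁ = 0`. -/
theorem stmt_11 {n : ℕ} (K : Set (EuclideanSpace ℝ (Fin n)))
    (hKconv : Convex ℝ K) (hKcomp : IsCompact K)
    (f g p : EuclideanSpace ℝ (Fin n) →ᵃ[ℝ] ℝ)
    (hf : ∀ x ∈ K, 0 ≤ f x ∧ f x ≤ 1)
    (hg : ∀ x ∈ K, 0 ≤ g x ∧ g x ≤ 1)
    (hp : ∀ x ∈ K, 0 ≤ p x ∧ p x ≤ f x ∧ p x ≤ g x ∧ f x + g x ≤ 1 + p x)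
    (x00 x10 x01 x11 : EuclideanSpace ℝ (Fin n))
    (hx00 : x00 ∈ K) (hx10 : x10 ∈ K) (hx01 : x01 ∈ K) (hx11 : x11 ∈ K)
    (hf00 : f x00 = 0) (hg00 : g x00 = 0)
    (hf10 : f x10 = 1) (hg10 : g x10 = 0)
    (hf01 : f x01 = 0) (hg01 : g x01 = 1)
    (hf11 : f x11 = 1) (hg11 : g x11 = 1)
    (hpar : x00 + x11 = x10 + x01) :
    p x11 = 1 ∧ p x00 = 0 ∧ p x10 = 0 ∧ p x01 = 0 := by
  obtain ⟨h1,h2,h3,h4⟩ := hp x00 hx00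
  obtain ⟨h5,h6,h7,h8⟩ := hp x10 hx10
  obtain ⟨h9,h10,h11,h12⟩ := hp x01 hx01
  obtain ⟨h13,h14,h15,h16⟩ := hp x11 hx11
  refine ⟨by linarith, by linarith, by linarith, by linarith⟩
end

section
/- There is no affine compatibility witness for effects f, g admitting parallelogram corner points: if x₀₀+x₁₁ = x₁₀+x₀₁ with f,g corner values (0,0),(1,0),(0,1),(1,1) and p is affine with 0 ≤ p ≤ f, p ≤ g, f+g ≤ 1+p on K, then a contradiction follows; hence f and g are incompatible. -/
/-- Effects admitting parallelogram corner points with values `(0,0),(1,0),(0,1),(1,1)`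
have no affine compatibility witness; hence they are incompatible. -/
theorem stmt_13 {n : ℕ} (K : Set (EuclideanSpace ℝ (Fin n)))
    (hKconv : Convex ℝ K) (hKcomp : IsCompact K)
    (f g : EuclideanSpace ℝ (Fin n) →ᵃ[ℝ] ℝ)
    (hf : ∀ x ∈ K, 0 ≤ f x ∧ f x ≤ 1)
    (hg : ∀ x ∈ K, 0 ≤ g x ∧ g x ≤ 1)
    (x00 x10 x01 x11 : EuclideanSpace ℝ (Fin n))
    (hx00 : x00 ∈ K) (hx10 : x10 ∈ K) (hx01 : x01 ∈ K) (hx11 : x11 ∈ K)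
    (hf00 : f x00 = 0) (hg00 : g x00 = 0)
    (hf10 : f x10 = 1) (hg10 : g x10 = 0)
    (hf01 : f x01 = 0) (hg01 : g x01 = 1)
    (hf11 : f x11 = 1) (hg11 : g x11 = 1)
    (hpar : x00 + x11 = x10 + x01) :
    ¬ ∃ p : EuclideanSpace ℝ (Fin n) →ᵃ[ℝ] ℝ,
      ∀ x ∈ K, 0 ≤ p x ∧ p x ≤ f x ∧ p x ≤ g x ∧ f x + g x ≤ 1 + p x := by
  rintro ⟨p, hp⟩
  obtain ⟨h00a, h00b, _, _⟩ := hp x00 hx00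
  obtain ⟨h10a, _, h10c, _⟩ := hp x10 hx10
  obtain ⟨h01a, h01b, _, _⟩ := hp x01 hx01
  obtain ⟨_, _, _, h11d⟩ := hp x11 hx11
  have e00 : p x00 = 0 := le_antisymm (hf00 ▸ h00b) h00a
  have e10 : p x10 = 0 := le_antisymm (hg10 ▸ h10c) h10a
  have e01 : p x01 = 0 := le_antisymm (hf01 ▸ h01b) h01a
  have e11 : (1 : ℝ) ≤ p x11 := by
    have := h11d; rw [hf11, hg11] at this; linarith
  -- affine identity
  have key : p x11 - p x00 = (p x10 - p x00) + (p x01 - p x00) := by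
    have h1 : p.linear (x11 - x00) = p x11 - p x00 := p.linearMap_vsub x11 x00
    have h2 : p.linear (x10 - x00) = p x10 - p x00 := p.linearMap_vsub x10 x00
    have h3 : p.linear (x01 - x00) = p x01 - p x00 := p.linearMap_vsub x01 x00
    have hsum : x11 - x00 = (x10 - x00) + (x01 - x00) := by
      have : x11 = x10 + x01 - x00 := by
        rw [eq_sub_iff_add_eq, ← hpar]; abel
      rw [this]; abel
    rw [← h1, ← h2, ← h3, hsum, map_add]
  rw [e00, e10, e01] at key
  linarith
end

section
/- Let S ⊂ ℝ² be a parallelogram, i.e. the convex hull of points z₁, z₂, z₃, z₄ with z₁+z₂ = z₃+z₄ and z₁, z₂, z₃, z₄ not collinear. Then there exist affine effects f, g on S (values in [0,1]) such that the pair (f,g) takes the corner-value pattern (0,0),(1,0),(0,1),(1,1) of Prop. maxInc-sufficient on the vertices of S, and hence f, g are maximally incompatible on S. -/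
section Aux

variable {E : Type*} [NormedAddCommGroup E] [NormedSpace ℝ E]

/-- Affine map from a linear functional plus base point. -/
noncomputable def affOf (φ : E →ₗ[ℝ] ℝ) (z : E) : E →ᵃ[ℝ] ℝ where
  toFun := fun x => φ (x - z)
  linear := φ
  map_vadd' := by
    intro p v
    simp [vadd_eq_add, add_sub_assoc, map_add]

@[simp] lemma affOf_apply (φ : E →ₗ[ℝ] ℝ) (z x : E) : affOf φ z x = φ (x - z) := rfl

end Aux

/-- On a parallelogram `S = conv{z₁,z₂,z₃,z₄} ⊂ ℝ²` (with `z₁+z₂ = z₃+z₄` and the points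
not collinear) there exist affine effects `f, g` realizing the corner-value pattern
`(0,0),(1,0),(0,1),(1,1)`, and `f, g` are maximally incompatible: any admixture
`λf+(1-λ)μ₁`, `λg+(1-λ)μ₂` that is compatible forces `λ ≤ 1/2`. -/
theorem stmt_17 (z₁ z₂ z₃ z₄ : EuclideanSpace ℝ (Fin 2))
    (hpar : z₁ + z₂ = z₃ + z₄)
    (hncol : ¬ Collinear ℝ ({z₁, z₂, z₃, z₄} : Set (EuclideanSpace ℝ (Fin 2))))
    (S : Set (EuclideanSpace ℝ (Fin 2)))
    (hS : S = convexHull ℝ ({z₁, z₂, z₃, z₄} : Set (EuclideanSpace ℝ (Fin 2)))) :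
    ∃ f g : EuclideanSpace ℝ (Fin 2) →ᵃ[ℝ] ℝ,
      (∀ x ∈ S, 0 ≤ f x ∧ f x ≤ 1) ∧ (∀ x ∈ S, 0 ≤ g x ∧ g x ≤ 1) ∧
      f z₁ = 0 ∧ g z₁ = 0 ∧
      f z₃ = 1 ∧ g z₃ = 0 ∧
      f z₄ = 0 ∧ g z₄ = 1 ∧
      f z₂ = 1 ∧ g z₂ = 1 ∧
      (∀ lam μ₁ μ₂ : ℝ, lam ∈ Set.Icc (0:ℝ) 1 → μ₁ ∈ Set.Icc (0:ℝ) 1 →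
        μ₂ ∈ Set.Icc (0:ℝ) 1 →
        (∃ p : EuclideanSpace ℝ (Fin 2) →ᵃ[ℝ] ℝ, ∀ x ∈ S,
          0 ≤ p x ∧ p x ≤ lam * f x + (1 - lam) * μ₁ ∧ p x ≤ lam * g x + (1 - lam) * μ₂ ∧
          (lam * f x + (1 - lam) * μ₁) + (lam * g x + (1 - lam) * μ₂) ≤ 1 + p x) →
        lam ≤ 1 / 2) := by
  have hz2 : z₂ - z₁ = (z₃ - z₁) + (z₄ - z₁) := by
    have : z₂ = z₃ + z₄ - z₁ := by rw [← hpar]; abel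
    rw [this]; abel
  -- linear independence of the edge vectors
  have hli : LinearIndependent ℝ ![z₃ - z₁, z₄ - z₁] := by
    rw [LinearIndependent.pair_iff]
    intro a b hab
    by_contra hc
    apply hncol
    have h1 : z₁ ∈ ({z₁, z₂, z₃, z₄} : Set (EuclideanSpace ℝ (Fin 2))) := by simp
    rw [collinear_iff_of_mem h1]
    rcases eq_or_ne a 0 with ha | ha
    · have hb : b ≠ 0 := by tauto
      have hv : z₄ - z₁ = 0 := by
        have : b • (z₄ - z₁) = 0 := by rw [ha] at hab; simpa using hab
        exact (smul_eq_zero.1 this).resolve_left hb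
      have h23 : z₂ - z₁ = z₃ - z₁ := by rw [hz2, hv]; abel
      refine ⟨z₃ - z₁, ?_⟩
      have E1 : ∃ r : ℝ, z₁ = r • (z₃ - z₁) +ᵥ z₁ := ⟨0, by simp⟩
      have E2 : ∃ r : ℝ, z₂ = r • (z₃ - z₁) +ᵥ z₁ := by
        refine ⟨1, ?_⟩
        simp only [one_smul, vadd_eq_add]
        rw [← h23]; abel
      have E3 : ∃ r : ℝ, z₃ = r • (z₃ - z₁) +ᵥ z₁ :=
        ⟨1, by simp only [one_smul, vadd_eq_add]; abel⟩
      have E4 : ∃ r : ℝ, z₄ = r • (z₃ - z₁) +ᵥ z₁ := by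
        refine ⟨0, ?_⟩
        have : z₄ = z₁ := by rwa [sub_eq_zero] at hv
        simp [this]
      intro q hq
      simp only [Set.mem_insert_iff, Set.mem_singleton_iff] at hq
      rcases hq with h | h | h | h <;> rw [h] <;> assumption
    · have hu : z₃ - z₁ = (-b / a) • (z₄ - z₁) := by
        have h' : a • (z₃ - z₁) = (-b) • (z₄ - z₁) := by
          rw [neg_smul]; linear_combination (norm := module) hab
        calc z₃ - z₁ = (a⁻¹ * a) • (z₃ - z₁) := by rw [inv_mul_cancel₀ ha, one_smul]
          _ = a⁻¹ • (a • (z₃ - z₁)) := by rw [mul_smul]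
          _ = a⁻¹ • ((-b) • (z₄ - z₁)) := by rw [h']
          _ = (-b / a) • (z₄ - z₁) := by rw [smul_smul]; ring_nf
      refine ⟨z₄ - z₁, ?_⟩
      have E1 : ∃ r : ℝ, z₁ = r • (z₄ - z₁) +ᵥ z₁ := ⟨0, by simp⟩
      have E2 : ∃ r : ℝ, z₂ = r • (z₄ - z₁) +ᵥ z₁ := by
        refine ⟨(-b / a) + 1, ?_⟩
        simp only [vadd_eq_add]
        rw [add_smul, one_smul, ← hu, ← hz2]; abel
      have E3 : ∃ r : ℝ, z₃ = r • (z₄ - z₁) +ᵥ z₁ :=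
        ⟨-b / a, by simp only [vadd_eq_add]; rw [← hu]; abel⟩
      have E4 : ∃ r : ℝ, z₄ = r • (z₄ - z₁) +ᵥ z₁ :=
        ⟨1, by simp only [one_smul, vadd_eq_add]; abel⟩
      intro q hq
      simp only [Set.mem_insert_iff, Set.mem_singleton_iff] at hq
      rcases hq with h | h | h | h <;> rw [h] <;> assumption
  have hcard : Fintype.card (Fin 2) = Module.finrank ℝ (EuclideanSpace ℝ (Fin 2)) := by
    simp
  let B := basisOfLinearIndependentOfCardEqFinrank hli hcard
  have hB : ⇑B = ![z₃ - z₁, z₄ - z₁] := coe_basisOfLinearIndependentOfCardEqFinrank hli hcard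
  have hB0 : B 0 = z₃ - z₁ := by rw [hB]; rfl
  have hB1 : B 1 = z₄ - z₁ := by rw [hB]; rfl
  have hc00 : B.coord 0 (z₃ - z₁) = 1 := by rw [← hB0]; simp
  have hc01 : B.coord 0 (z₄ - z₁) = 0 := by rw [← hB1]; simp [Module.Basis.coord_apply]
  have hc10 : B.coord 1 (z₃ - z₁) = 0 := by rw [← hB0]; simp [Module.Basis.coord_apply]
  have hc11 : B.coord 1 (z₄ - z₁) = 1 := by rw [← hB1]; simp
  refine ⟨affOf (B.coord 0) z₁, affOf (B.coord 1) z₁, ?_, ?_, ?_, ?_, ?_, ?_, ?_, ?_, ?_, ?_, ?_⟩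
  case refine_3 => simp
  case refine_4 => simp
  case refine_5 => simpa using hc00
  case refine_6 => simpa using hc10
  case refine_7 => simpa using hc01
  case refine_8 => simpa using hc11
  case refine_9 => simp only [affOf_apply]; rw [hz2, map_add, hc00, hc01]; norm_num
  case refine_10 => simp only [affOf_apply]; rw [hz2, map_add, hc10, hc11]; norm_num
  case refine_1 =>
    rw [hS]
    intro x hx
    have : x ∈ (affOf (B.coord 0) z₁) ⁻¹' Set.Icc (0:ℝ) 1 := by
      refine convexHull_min ?_ ((convex_Icc (0:ℝ) 1).affine_preimage _) hx
      intro y hy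
      simp only [Set.mem_insert_iff, Set.mem_singleton_iff] at hy
      rcases hy with rfl | rfl | rfl | rfl <;>
        simp only [Set.mem_preimage, Set.mem_Icc, affOf_apply] <;>
        first
        | (rw [hz2, map_add, hc00, hc01]; norm_num)
        | (rw [hc00]; norm_num)
        | (rw [hc01]; norm_num)
        | simp
    exact this
  case refine_2 =>
    rw [hS]
    intro x hx
    have : x ∈ (affOf (B.coord 1) z₁) ⁻¹' Set.Icc (0:ℝ) 1 := by
      refine convexHull_min ?_ ((convex_Icc (0:ℝ) 1).affine_preimage _) hx
      intro y hy
      simp only [Set.mem_insert_iff, Set.mem_singleton_iff] at hy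
      rcases hy with rfl | rfl | rfl | rfl <;>
        simp only [Set.mem_preimage, Set.mem_Icc, affOf_apply] <;>
        first
        | (rw [hz2, map_add, hc10, hc11]; norm_num)
        | (rw [hc10]; norm_num)
        | (rw [hc11]; norm_num)
        | simp
    exact this
  case refine_11 =>
    intro lam μ₁ μ₂ hlam hμ₁ hμ₂ ⟨p, hp⟩
    have hmem : ∀ z ∈ ({z₁, z₂, z₃, z₄} : Set (EuclideanSpace ℝ (Fin 2))), z ∈ S := by
      rw [hS]; intro z hz; exact subset_convexHull ℝ _ hz
    have h1 := hp z₁ (hmem z₁ (by simp))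
    have h2 := hp z₂ (hmem z₂ (by simp))
    have h3 := hp z₃ (hmem z₃ (by simp))
    have h4 := hp z₄ (hmem z₄ (by simp))
    -- values of f, g at vertices
    simp only [affOf_apply, sub_self, map_zero] at h1 h2 h3 h4
    rw [hz2, map_add, hc00, hc01] at h2
    rw [show (B.coord 1) ((z₃ - z₁) + (z₄ - z₁)) = 1 by rw [map_add, hc10, hc11]; norm_num]
      at h2
    rw [hc00, hc10] at h3
    rw [hc01, hc11] at h4
    -- affine identity: p z₂ + p z₁ = p z₃ + p z₄
    have key : p z₂ + p z₁ = p z₃ + p z₄ := by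
      have e2 := p.map_vadd z₁ (z₂ - z₁)
      have e3 := p.map_vadd z₁ (z₃ - z₁)
      have e4 := p.map_vadd z₁ (z₄ - z₁)
      simp only [vadd_eq_add, sub_add_cancel] at e2 e3 e4
      rw [hz2, map_add] at e2
      rw [e2, e3, e4]; ring
    obtain ⟨hp1, _, _, _⟩ := h1
    obtain ⟨_, _, _, hp2⟩ := h2
    obtain ⟨_, _, hp3, _⟩ := h3
    obtain ⟨_, hp4, _, _⟩ := h4
    linarith [hp1, hp2, hp3, hp4, key]
end

section
/- For the truncated-pyramid state space K = conv{(0,0,0),(2,0,0),(0,2,0),(2,1,0),(1,2,0),(1,1,1),(1,0,1),(0,1,1),(0,0,1)} ⊂ ℝ³, there do not exist two affine effects f, g : K → [0,1] such that f = 0 on the edge conv{(0,1,1),(0,0,1)} and f = 1 on the opposite edge conv{(1,1,1),(1,0,1)} of the top square face, and g is likewise 0 on one and 1 on the other of the remaining pair of opposite edges of the top square face. -/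
/-- The truncated-pyramid state space. -/
noncomputable def Ktp : Set (Fin 3 → ℝ) :=
  convexHull ℝ ({![0,0,0], ![2,0,0], ![0,2,0], ![2,1,0], ![1,2,0],
    ![1,1,1], ![1,0,1], ![0,1,1], ![0,0,1]} : Set (Fin 3 → ℝ))

/-- On the truncated pyramid `K`, there is no pair of affine effects `f, g` discriminating
the two pairs of opposite edges of the top square face: no affine effect `f` can satisfy
`f = 0` on `{(0,0,1),(0,1,1)}` and `f = 1` on `{(1,0,1),(1,1,1)}` together with a second
effect `g` with `g = 0` on `{(0,0,1),(1,0,1)}` and `g = 1` on `{(0,1,1),(1,1,1)}`. -/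
theorem stmt_18 :
    ¬ ∃ f g : (Fin 3 → ℝ) →ᵃ[ℝ] ℝ,
      (∀ x ∈ Ktp, 0 ≤ f x ∧ f x ≤ 1) ∧ (∀ x ∈ Ktp, 0 ≤ g x ∧ g x ≤ 1) ∧
      f ![0,0,1] = 0 ∧ f ![0,1,1] = 0 ∧ f ![1,0,1] = 1 ∧ f ![1,1,1] = 1 ∧
      g ![0,0,1] = 0 ∧ g ![1,0,1] = 0 ∧ g ![0,1,1] = 1 ∧ g ![1,1,1] = 1 := by
  rintro ⟨f, g, hf, hg, hf1, hf2, hf3, hf4, -⟩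
  have hmem : ∀ x ∈ ({![0,0,0], ![2,0,0], ![0,2,0], ![2,1,0], ![1,2,0],
      ![1,1,1], ![1,0,1], ![0,1,1], ![0,0,1]} : Set (Fin 3 → ℝ)), x ∈ Ktp :=
    fun x hx => subset_convexHull ℝ _ hx
  have h0 : (![0,0,0] : Fin 3 → ℝ) ∈ Ktp := hmem _ (by simp)
  have h2 : (![2,0,0] : Fin 3 → ℝ) ∈ Ktp := hmem _ (by simp)
  have hz : (![0,0,0] : Fin 3 → ℝ) = 0 := by
    funext i; fin_cases i <;> simp
  have key : ∀ x : Fin 3 → ℝ, f x = f.linear x + f 0 := by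
    intro x
    have := f.map_vadd 0 x
    simpa [vadd_eq_add] using this
  have hlin : (![2,0,0] : Fin 3 → ℝ) = (2:ℝ) • ![1,0,1] - (2:ℝ) • ![0,0,1] := by
    funext i; fin_cases i <;> simp <;> norm_num
  have hval : f ![2,0,0] = f 0 + 2 := by
    have e1 : f.linear ![1,0,1] = 1 - f 0 := by
      have := key ![1,0,1]; rw [hf3] at this; linarith
    have e2 : f.linear ![0,0,1] = 0 - f 0 := by
      have := key ![0,0,1]; rw [hf1] at this; linarith
    have e3 : f.linear ![2,0,0] = 2 := by
      rw [hlin, f.linear.map_sub, f.linear.map_smul, f.linear.map_smul, e1, e2]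
      simp [smul_eq_mul]; ring
    have := key ![2,0,0]
    rw [e3] at this
    linarith
  have hA := (hf _ h0).1
  have hB := (hf _ h2).2
  rw [hz] at hA
  rw [hval] at hB
  linarith
end
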